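/- arXiv:1311.2495 — 2 statements merged into one kernel-verified Lean document; each statement's English description precedes it below -/
import Mathlib

section
/- Let d, k, p be positive integers with k ≤ p ≤ d, let U ∈ ℝ^{d×k} have orthonormal columns, let V ∈ ℝ^{d×(d−k)} be an orthonormal basis of the orthogonal complement of the range of U, and let X ∈ ℝ^{d×p} be such that Uᵀ X has rank k. Then tan θ_k(U, X) ≤ ‖Vᵀ X‖ / σ_k(Uᵀ X), where σ_k(Uᵀ X) denotes the k-th largest singular value of the k×p matrix Uᵀ X. -/
open MeasureTheory ProbabilityTheory

noncomputable def vnorm {n : ℕ} (v : Fin n → ℝ) : ℝ := Real.sqrt (∑ i, v i ^ 2)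

noncomputable def vinf {n : ℕ} (v : Fin n → ℝ) : ℝ := ⨆ i, |v i|

def dotp {n : ℕ} (v w : Fin n → ℝ) : ℝ := ∑ i, v i * w i

/-- Spectral norm (largest singular value) of a real matrix. -/
noncomputable def specNorm {m n : ℕ} (A : Matrix (Fin m) (Fin n) ℝ) : ℝ :=
  sSup {r | ∃ v : Fin n → ℝ, vnorm v = 1 ∧ r = vnorm (A.mulVec v)}

/-- Largest entry in absolute value. -/
noncomputable def entryNorm {m n : ℕ} (A : Matrix (Fin m) (Fin n) ℝ) : ℝ :=
  ⨆ i, ⨆ j, |A i j|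

/-- `P` is a `p × p` orthogonal projection matrix of rank `k`. -/
def IsProjOfRank {p : ℕ} (k : ℕ) (P : Matrix (Fin p) (Fin p) ℝ) : Prop :=
  P.transpose = P ∧ P * P = P ∧ P.rank = k

/-- cos of the k-th principal angle between range U and range X. -/
noncomputable def cosPA {d q p : ℕ} (k : ℕ) (U : Matrix (Fin d) (Fin q) ℝ)
    (X : Matrix (Fin d) (Fin p) ℝ) : ℝ :=
  sSup {r | ∃ P : Matrix (Fin p) (Fin p) ℝ, IsProjOfRank k P ∧
    r = sInf {s | ∃ w : Fin p → ℝ, vnorm w = 1 ∧ P.mulVec w = w ∧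
      s = vnorm ((U.transpose * X).mulVec w) / vnorm (X.mulVec w)}}

/-- tan of the k-th principal angle between range U and range X, where V is an
orthonormal basis of the orthogonal complement of range U. -/
noncomputable def tanPA {d q q' p : ℕ} (k : ℕ) (U : Matrix (Fin d) (Fin q) ℝ)
    (V : Matrix (Fin d) (Fin q') ℝ) (X : Matrix (Fin d) (Fin p) ℝ) : ℝ :=
  sInf {r | ∃ P : Matrix (Fin p) (Fin p) ℝ, IsProjOfRank k P ∧
    r = sSup {s | ∃ w : Fin p → ℝ, vnorm w = 1 ∧ P.mulVec w = w ∧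
      s = vnorm ((V.transpose * X).mulVec w) / vnorm ((U.transpose * X).mulVec w)}}

/-- Column-wise Gram–Schmidt orthonormalization of a matrix. -/
noncomputable def matGS {d p : ℕ} (Y : Matrix (Fin d) (Fin p) ℝ) : Matrix (Fin d) (Fin p) ℝ :=
  Matrix.of fun i j =>
    (WithLp.equiv 2 (Fin d → ℝ))
      (@InnerProductSpace.gramSchmidtNormed ℝ (EuclideanSpace ℝ (Fin d)) _ _ _ (Fin p) _ _
        (inferInstance : WellFoundedLT (Fin p))
        (fun j' : Fin p => (WithLp.equiv 2 (Fin d → ℝ)).symm fun i' => Y i' j') j) i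

/-- The law of a `d × p` random matrix with i.i.d. standard Gaussian entries. -/
noncomputable def stdGaussianMatrix (d p : ℕ) : Measure (Fin d → Fin p → ℝ) :=
  Measure.pi fun _ => Measure.pi fun _ => gaussianReal 0 1

/-- The smallest (i.e. k-th largest, for a full-rank `k × p` matrix with `k ≤ p`)
singular value of a `k × p` real matrix. -/
noncomputable def sigmaKth {k p : ℕ} (M : Matrix (Fin k) (Fin p) ℝ) : ℝ :=
  sInf {r | ∃ u : Fin k → ℝ, vnorm u = 1 ∧ r = vnorm (M.transpose.mulVec u)}

/-! Let `A = Uᵀ X` and take for `Π` the orthogonal projection onto the row space of `A`, which has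
rank `k`. A unit vector `w` in that space is `w = Aᵀ u`, so `1 = ⟨u, A w⟩ ≤ ‖u‖ ‖A w‖`, while
`σ_k(A) ≤ ‖Aᵀ u‖ / ‖u‖ = 1 / ‖u‖`. Hence `‖A w‖ ≥ σ_k(A)`, and every ratio `‖Vᵀ X w‖ / ‖A w‖`
in the maximum defining `tan θ_k` for this `Π` is at most `‖Vᵀ X‖ / σ_k(A)`. -/

open Matrix WithLp Module

lemma vnorm_eq_norm {n : ℕ} (v : Fin n → ℝ) : vnorm v = ‖toLp 2 v‖ := by
  simp [vnorm, EuclideanSpace.norm_eq]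

lemma vnorm_nonneg {n : ℕ} (v : Fin n → ℝ) : 0 ≤ vnorm v := Real.sqrt_nonneg _

lemma vnorm_smul {n : ℕ} (c : ℝ) (v : Fin n → ℝ) : vnorm (c • v) = |c| * vnorm v := by
  simp [vnorm_eq_norm, norm_smul]

lemma vnorm_pos {n : ℕ} {v : Fin n → ℝ} (hv : v ≠ 0) : 0 < vnorm v := by
  simpa [vnorm_eq_norm] using hv

lemma dotProduct_self_eq_vnorm_sq {n : ℕ} (v : Fin n → ℝ) : v ⬝ᵥ v = vnorm v ^ 2 := by
  rw [vnorm_eq_norm, ← real_inner_self_eq_norm_sq]; rfl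

lemma dotProduct_le_vnorm_mul_vnorm {n : ℕ} (v w : Fin n → ℝ) : v ⬝ᵥ w ≤ vnorm v * vnorm w := by
  rw [vnorm_eq_norm, vnorm_eq_norm, dotProduct_comm]
  exact real_inner_le_norm (toLp 2 v) (toLp 2 w)

lemma vnorm_mulVec_le {m n : ℕ} (A : Matrix (Fin m) (Fin n) ℝ) (v : Fin n → ℝ) :
    vnorm (A *ᵥ v) ≤ ‖(toLpLin 2 2 A).toContinuousLinearMap‖ * vnorm v := by
  simp only [vnorm_eq_norm]
  exact (toLpLin 2 2 A).toContinuousLinearMap.le_opNorm (toLp 2 v)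

lemma vnorm_mulVec_le_specNorm {m n : ℕ} (A : Matrix (Fin m) (Fin n) ℝ) {v : Fin n → ℝ}
    (hv : vnorm v = 1) : vnorm (A *ᵥ v) ≤ specNorm A := by
  refine le_csSup ⟨‖(toLpLin 2 2 A).toContinuousLinearMap‖, ?_⟩ ⟨v, hv, rfl⟩
  rintro r ⟨v, hv, rfl⟩
  simpa [hv] using vnorm_mulVec_le A v

lemma specNorm_nonneg {m n : ℕ} (A : Matrix (Fin m) (Fin n) ℝ) : 0 ≤ specNorm A :=
  Real.sSup_nonneg (by rintro r ⟨v, -, rfl⟩; exact vnorm_nonneg _)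

lemma sigmaKth_le_div {k p : ℕ} (A : Matrix (Fin k) (Fin p) ℝ) {u : Fin k → ℝ} (hu : u ≠ 0) :
    sigmaKth A ≤ vnorm (Aᵀ *ᵥ u) / vnorm u := by
  have hpos := vnorm_pos hu
  refine csInf_le ⟨0, ?_⟩ ⟨(vnorm u)⁻¹ • u, ?_, ?_⟩
  · rintro r ⟨v, -, rfl⟩
    exact vnorm_nonneg _
  · rw [vnorm_smul, abs_of_pos (inv_pos.2 hpos), inv_mul_cancel₀ hpos.ne']
  · rw [mulVec_smul, vnorm_smul, abs_of_pos (inv_pos.2 hpos), inv_mul_eq_div]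

lemma sigmaKth_le_vnorm_mulVec {k p : ℕ} (A : Matrix (Fin k) (Fin p) ℝ) (u : Fin k → ℝ)
    (hw : vnorm (Aᵀ *ᵥ u) = 1) : sigmaKth A ≤ vnorm (A *ᵥ (Aᵀ *ᵥ u)) := by
  have hu : u ≠ 0 := by
    rintro rfl
    simp [vnorm] at hw
  have hpos := vnorm_pos hu
  have hdot : 1 ≤ vnorm u * vnorm (A *ᵥ (Aᵀ *ᵥ u)) :=
    calc 1 = (Aᵀ *ᵥ u) ⬝ᵥ (Aᵀ *ᵥ u) := by rw [dotProduct_self_eq_vnorm_sq, hw, one_pow]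
      _ = u ⬝ᵥ (A *ᵥ (Aᵀ *ᵥ u)) := by rw [dotProduct_mulVec u A, mulVec_transpose]
      _ ≤ vnorm u * vnorm (A *ᵥ (Aᵀ *ᵥ u)) := dotProduct_le_vnorm_mul_vnorm _ _
  calc sigmaKth A ≤ vnorm (Aᵀ *ᵥ u) / vnorm u := sigmaKth_le_div A hu
    _ = 1 / vnorm u := by rw [hw]
    _ ≤ vnorm (A *ᵥ (Aᵀ *ᵥ u)) := by rw [div_le_iff₀ hpos]; linarith

lemma mulVec_injective_of_rank_eq {m n : ℕ} {M : Matrix (Fin m) (Fin n) ℝ} (hM : M.rank = n) :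
    Function.Injective M.mulVec := by
  have hsum := M.mulVecLin.finrank_range_add_finrank_ker
  rw [← rank, hM, finrank_fin_fun] at hsum
  have hker : LinearMap.ker M.mulVecLin = ⊥ := Submodule.finrank_eq_zero.mp (by omega)
  exact LinearMap.ker_eq_bot.mp hker

lemma exists_pos_mul_vnorm_le_vnorm_mulVec {m n : ℕ} {M : Matrix (Fin m) (Fin n) ℝ}
    (hM : Function.Injective M.mulVec) : ∃ c > 0, ∀ v, c * vnorm v ≤ vnorm (M *ᵥ v) := by
  have hT : Function.Injective (toLpLin 2 2 M) := fun x y hxy =>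
    ofLp_injective 2 (hM (congrArg ofLp hxy))
  obtain ⟨K, hK, hanti⟩ := (toLpLin 2 2 M).injective_iff_antilipschitz.mp hT
  have hK : 0 < (K : ℝ) := hK
  refine ⟨(K : ℝ)⁻¹, inv_pos.2 hK, fun v => ?_⟩
  have h := hanti.le_mul_dist (toLp 2 v) 0
  rw [map_zero, dist_zero_right, dist_zero_right, toLpLin_toLp, toLin'_apply, ← vnorm_eq_norm,
    ← vnorm_eq_norm] at h
  rw [inv_mul_le_iff₀ hK]
  exact h

lemma sigmaKth_pos {k p : ℕ} (hk : 0 < k) {A : Matrix (Fin k) (Fin p) ℝ} (hA : A.rank = k) :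
    0 < sigmaKth A := by
  obtain ⟨c, hc, hbound⟩ :=
    exists_pos_mul_vnorm_le_vnorm_mulVec (mulVec_injective_of_rank_eq (A.rank_transpose.trans hA))
  have hunit : vnorm (Pi.single (⟨0, hk⟩ : Fin k) (1 : ℝ)) = 1 := by
    simp [vnorm_eq_norm]
  refine hc.trans_le (le_csInf ⟨_, _, hunit, rfl⟩ ?_)
  rintro r ⟨u, hu, rfl⟩
  simpa [hu] using hbound u

lemma exists_isProjOfRank_fixed_mem {p : ℕ} (W : Submodule ℝ (EuclideanSpace ℝ (Fin p))) :
    ∃ P : Matrix (Fin p) (Fin p) ℝ, IsProjOfRank (finrank ℝ W) P ∧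
      ∀ w, P *ᵥ w = w → toLp 2 w ∈ W := by
  let e := toEuclideanCLM (𝕜 := ℝ) (n := Fin p)
  obtain ⟨P, hPW⟩ : ∃ P, e P = W.starProjection := e.surjective _
  refine ⟨P, ⟨EquivLike.injective e ?_, EquivLike.injective e ?_, ?_⟩, fun w hw => ?_⟩
  · rw [← conjTranspose_eq_transpose_of_trivial, ← star_eq_conjTranspose, map_star, hPW,
      (isSelfAdjoint_starProjection W).star_eq]
  · rw [map_mul, hPW, W.isIdempotentElem_starProjection.eq]
  · have hlin : (e P : EuclideanSpace ℝ (Fin p) →ₗ[ℝ] _) = toLpLin 2 2 P := rfl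
    rw [rank_eq_finrank_range_toLin P (PiLp.basisFun 2 ℝ (Fin p)) (PiLp.basisFun 2 ℝ (Fin p)),
      ← toLpLin_eq_toLin, ← hlin, hPW]
    exact congrArg (fun S : Submodule ℝ _ => finrank ℝ S) W.range_starProjection
  · have hfix : e P (toLp 2 w) = toLp 2 w := congrArg (toLp 2) hw
    rw [← hfix, hPW]
    exact W.starProjection_apply_mem _

lemma exists_isProjOfRank_fixed_mem_range_transpose {k p : ℕ} (A : Matrix (Fin k) (Fin p) ℝ) :
    ∃ P : Matrix (Fin p) (Fin p) ℝ, IsProjOfRank A.rank P ∧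
      ∀ w, P *ᵥ w = w → ∃ u, Aᵀ *ᵥ u = w := by
  obtain ⟨P, hP, hfix⟩ := exists_isProjOfRank_fixed_mem (LinearMap.range (toLpLin 2 2 Aᵀ))
  rw [← rank_transpose, rank_eq_finrank_range_toLin Aᵀ (PiLp.basisFun 2 ℝ (Fin p))
    (PiLp.basisFun 2 ℝ (Fin k)), ← toLpLin_eq_toLin]
  refine ⟨P, hP, fun w hw => ?_⟩
  obtain ⟨u, hu⟩ := hfix w hw
  exact ⟨ofLp u, congrArg ofLp hu⟩

lemma tanPA_le {d q q' p k : ℕ} {U : Matrix (Fin d) (Fin q) ℝ} {V : Matrix (Fin d) (Fin q') ℝ}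
    {X : Matrix (Fin d) (Fin p) ℝ} {P : Matrix (Fin p) (Fin p) ℝ} (hP : IsProjOfRank k P)
    {c : ℝ} (hc : 0 ≤ c)
    (h : ∀ w, vnorm w = 1 → P *ᵥ w = w → vnorm ((Vᵀ * X) *ᵥ w) / vnorm ((Uᵀ * X) *ᵥ w) ≤ c) :
    tanPA k U V X ≤ c := by
  rw [tanPA]
  refine le_trans (csInf_le ?_ ⟨P, hP, rfl⟩) (Real.sSup_le ?_ hc)
  · refine ⟨0, ?_⟩
    rintro r ⟨Q, -, rfl⟩
    refine Real.sSup_nonneg ?_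
    rintro s ⟨w, -, -, rfl⟩
    exact div_nonneg (vnorm_nonneg _) (vnorm_nonneg _)
  · rintro s ⟨w, hw, hPw, rfl⟩
    exact h w hw hPw

theorem stmt3_general (d k p : ℕ) (hk : 0 < k)
    (U : Matrix (Fin d) (Fin k) ℝ) (V : Matrix (Fin d) (Fin (d - k)) ℝ)
    (X : Matrix (Fin d) (Fin p) ℝ)
    (hrank : (U.transpose * X).rank = k) :
    tanPA k U V X ≤ specNorm (V.transpose * X) / sigmaKth (U.transpose * X) := by
  obtain ⟨P, hP, hrow⟩ := exists_isProjOfRank_fixed_mem_range_transpose (Uᵀ * X)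
  rw [hrank] at hP
  have hσ := sigmaKth_pos hk hrank
  refine tanPA_le hP (div_nonneg (specNorm_nonneg _) hσ.le) fun w hw hPw => ?_
  obtain ⟨u, rfl⟩ := hrow w hPw
  exact div_le_div₀ (specNorm_nonneg _) (vnorm_mulVec_le_specNorm _ hw) hσ
    (sigmaKth_le_vnorm_mulVec _ u hw)

/-- `tan θ_k(U, X) ≤ ‖Vᵀ X‖ / σ_k(Uᵀ X)`. -/
theorem stmt3 (d k p : ℕ) (hk : 0 < k) (hkp : k ≤ p) (hpd : p ≤ d)
    (U : Matrix (Fin d) (Fin k) ℝ) (V : Matrix (Fin d) (Fin (d - k)) ℝ)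
    (X : Matrix (Fin d) (Fin p) ℝ)
    (hU : U.transpose * U = 1)
    (hV : V.transpose * V = 1) (hUV : U.transpose * V = 0)
    (hrank : (U.transpose * X).rank = k) :
    tanPA k U V X ≤ specNorm (V.transpose * X) / sigmaKth (U.transpose * X) :=
  stmt3_general d k p hk U V X hrank
end

section
/- Let A ∈ ℝ^{d×d} be symmetric positive semidefinite with eigenvalues σ_1 ≥ … ≥ σ_d ≥ 0, let U ∈ ℝ^{d×k} be an orthonormal set of eigenvectors for the largest k eigenvalues, and let X ∈ ℝ^{d×k} have orthonormal columns. If ‖(I − X Xᵀ) U‖ ≤ α, then ‖(I − X Xᵀ) A‖ ≤ σ_{k+1} + α σ_1. -/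
/-! Let `J` be the inclusion of the first `k` coordinates, so that `U = W J`. Splitting the
diagonal `D` of eigenvalues as `J (Jᵀ D) + (1 - J Jᵀ) D` gives
`W D Wᵀ = U (Jᵀ D) Wᵀ + W ((1 - J Jᵀ) D) Wᵀ`. After compression by the projection `1 - X Xᵀ`
the first term has norm at most `‖(1 - X Xᵀ) U‖ ‖D‖ ≤ α σ₁`, and the second at most
`‖(1 - J Jᵀ) D‖ ≤ σ_{k+1}`, the largest remaining eigenvalue. `specNorm` is Mathlib's L2
operator norm, so only the triangle inequality and submultiplicativity are needed. -/

open MeasureTheory ProbabilityTheory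

open scoped Matrix.Norms.L2Operator

lemma vnorm_eq_norm_toLp {n : ℕ} (v : Fin n → ℝ) : vnorm v = ‖WithLp.toLp 2 v‖ := by
  simp [vnorm, EuclideanSpace.norm_eq]

theorem specNorm_eq_l2_opNorm {m n : ℕ} (A : Matrix (Fin m) (Fin n) ℝ) : specNorm A = ‖A‖ := by
  rw [Matrix.l2_opNorm_def, ← ContinuousLinearMap.sSup_sphere_eq_norm, specNorm]
  congr 1
  ext r
  constructor
  · rintro ⟨v, hv, rfl⟩
    exact ⟨WithLp.toLp 2 v, by simpa [vnorm_eq_norm_toLp] using hv, by simp [vnorm_eq_norm_toLp]⟩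
  · rintro ⟨x, hx, rfl⟩
    exact ⟨x.ofLp, by simpa [vnorm_eq_norm_toLp] using hx,
      by simp [vnorm_eq_norm_toLp, Matrix.toLpLin_apply]⟩

namespace Matrix

section L2OpNorm

variable {𝕜 m n l : Type*} [RCLike 𝕜] [Fintype m] [Fintype n] [DecidableEq n]
  [Fintype l] [DecidableEq l]

lemma l2_opNorm_le_one_of_conjTranspose_mul_self_eq_one {A : Matrix m n 𝕜}
    (h : Aᴴ * A = 1) : ‖A‖ ≤ 1 := by
  have h1 : ‖(1 : Matrix n n 𝕜)‖ ≤ 1 := by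
    rw [← diagonal_one, l2_opNorm_diagonal]
    exact pi_norm_const_le 1 |>.trans norm_one.le
  have := l2_opNorm_conjTranspose_mul_self A
  rw [h] at this
  nlinarith [norm_nonneg A]

lemma l2_opNorm_le_one_of_conjTranspose_mul_self_eq_self {A : Matrix n n 𝕜}
    (h : Aᴴ * A = A) : ‖A‖ ≤ 1 := by
  have := l2_opNorm_conjTranspose_mul_self A
  rw [h] at this
  nlinarith [norm_nonneg A]

lemma l2_opNorm_one_sub_mul_conjTranspose_le_one [DecidableEq m] {X : Matrix m n 𝕜}
    (h : Xᴴ * X = 1) : ‖1 - X * Xᴴ‖ ≤ 1 := by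
  refine l2_opNorm_le_one_of_conjTranspose_mul_self_eq_self ?_
  rw [conjTranspose_sub, conjTranspose_one, conjTranspose_mul, conjTranspose_conjTranspose,
    sub_mul, one_mul, mul_sub, mul_one, Matrix.mul_assoc X, ← Matrix.mul_assoc Xᴴ, h,
    Matrix.one_mul, sub_self, sub_zero]

lemma l2_opNorm_diagonal_le {v : n → 𝕜} {c : ℝ} (hc : 0 ≤ c) (hv : ∀ i, ‖v i‖ ≤ c) :
    ‖diagonal v‖ ≤ c := by
  rw [l2_opNorm_diagonal]
  exact (pi_norm_le_iff_of_nonneg hc).mpr hv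

lemma l2_opNorm_mul_mul_le {o : Type*} [Fintype o] [DecidableEq o] (A : Matrix m n 𝕜)
    (B : Matrix n l 𝕜) (C : Matrix l o 𝕜) : ‖A * B * C‖ ≤ ‖A‖ * ‖B‖ * ‖C‖ :=
  (l2_opNorm_mul _ _).trans (by gcongr; exact l2_opNorm_mul _ _)

lemma l2_opNorm_mul_add_mul_mul_conjTranspose_le {Q W T : Matrix n n 𝕜} {U : Matrix n l 𝕜}
    {B : Matrix l n 𝕜} (hQ : ‖Q‖ ≤ 1) (hW : ‖W‖ ≤ 1) :
    ‖Q * ((U * B + W * T) * Wᴴ)‖ ≤ ‖Q * U‖ * ‖B‖ + ‖T‖ := by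
  have hWH : ‖Wᴴ‖ ≤ 1 := (l2_opNorm_conjTranspose W).trans_le hW
  rw [Matrix.add_mul, Matrix.mul_add]
  refine (norm_add_le _ _).trans (add_le_add ?_ ?_)
  · calc ‖Q * (U * B * Wᴴ)‖ ≤ ‖Q * U‖ * ‖B‖ * ‖Wᴴ‖ := by
          rw [← Matrix.mul_assoc, ← Matrix.mul_assoc]
          exact l2_opNorm_mul_mul_le _ _ _
      _ ≤ ‖Q * U‖ * ‖B‖ := mul_le_of_le_one_right (by positivity) hWH
  · calc ‖Q * (W * T * Wᴴ)‖ ≤ ‖Q‖ * (‖W‖ * ‖T‖ * ‖Wᴴ‖) := by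
          exact (l2_opNorm_mul _ _).trans (by gcongr; exact l2_opNorm_mul_mul_le _ _ _)
      _ ≤ 1 * (1 * ‖T‖ * 1) := by gcongr
      _ = ‖T‖ := by ring

end L2OpNorm

section castLE

variable {R : Type*} [Ring R] {k d : ℕ} (h : k ≤ d)

variable (R) in
def castLEIncl : Matrix (Fin d) (Fin k) R :=
  (1 : Matrix (Fin d) (Fin d) R).submatrix id (Fin.castLE h)

lemma mul_castLEIncl {m : Type*} (W : Matrix m (Fin d) R) :
    W * castLEIncl R h = W.submatrix id (Fin.castLE h) := by
  ext i j
  simp [castLEIncl, mul_apply, one_apply]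

variable [StarRing R]

lemma castLEIncl_conjTranspose_mul_self : (castLEIncl R h)ᴴ * castLEIncl R h = 1 := by
  ext i j
  simp [castLEIncl, mul_apply, one_apply]

lemma one_sub_castLEIncl_mul_conjTranspose :
    1 - castLEIncl R h * (castLEIncl R h)ᴴ =
      diagonal fun i : Fin d => if (i : ℕ) < k then 0 else 1 := by
  ext i j
  rw [sub_apply, mul_apply, diagonal_apply]
  by_cases hi : (i : ℕ) < k
  · rw [Fintype.sum_eq_single ⟨i, hi⟩ fun x hx => ?_]
    · simp [castLEIncl, hi, one_apply, eq_comm, apply_ite star]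
    · simp [castLEIncl, one_apply, Fin.ext_iff] at hx ⊢
      omega
  · rw [Fintype.sum_eq_zero _ fun x => ?_]
    · simp [hi, one_apply]
    · simp [castLEIncl, one_apply, Fin.ext_iff]
      omega

end castLE

section Eigenvalues

variable {d k : ℕ} {σ : ℕ → ℝ}

lemma l2_opNorm_diagonal_tail_le (hk : k < d) (hσ : AntitoneOn σ (Set.Icc 1 d)) (hσd : 0 ≤ σ d) :
    ‖diagonal fun i : Fin d => if (i : ℕ) < k then 0 else σ (i + 1)‖ ≤ σ (k + 1) := by
  have hnonneg : ∀ j ∈ Set.Icc 1 d, 0 ≤ σ j := fun j hj =>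
    hσd.trans (hσ hj ⟨hj.1.trans hj.2, le_rfl⟩ hj.2)
  have hk1 : k + 1 ∈ Set.Icc 1 d := ⟨by omega, by omega⟩
  refine l2_opNorm_diagonal_le (hnonneg _ hk1) fun i => ?_
  split_ifs with hi
  · simpa using hnonneg _ hk1
  · have hi1 : (i : ℕ) + 1 ∈ Set.Icc 1 d := ⟨by omega, by omega⟩
    rw [Real.norm_eq_abs, abs_of_nonneg (hnonneg _ hi1)]
    exact hσ hk1 hi1 (by omega)

lemma l2_opNorm_castLEIncl_conjTranspose_mul_diagonal_le (hk : k < d)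
    (hσ : AntitoneOn σ (Set.Icc 1 d)) (hσd : 0 ≤ σ d) :
    ‖(castLEIncl ℝ hk.le)ᴴ * diagonal fun i : Fin d => σ (i + 1)‖ ≤ σ 1 :=
  calc _ ≤ ‖(castLEIncl ℝ hk.le)ᴴ‖ * ‖diagonal fun i : Fin d => σ (i + 1)‖ := l2_opNorm_mul _ _
    _ ≤ 1 * σ 1 := by
        gcongr
        · exact (l2_opNorm_conjTranspose _).trans_le
            (l2_opNorm_le_one_of_conjTranspose_mul_self_eq_one
              (castLEIncl_conjTranspose_mul_self _))
        · simpa only [Nat.not_lt_zero, if_false] using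
            l2_opNorm_diagonal_tail_le (by omega : 0 < d) hσ hσd
    _ = σ 1 := one_mul _

lemma l2_opNorm_one_sub_castLEIncl_mul_diagonal_le (hk : k < d)
    (hσ : AntitoneOn σ (Set.Icc 1 d)) (hσd : 0 ≤ σ d) :
    ‖(1 - castLEIncl ℝ hk.le * (castLEIncl ℝ hk.le)ᴴ) * diagonal fun i : Fin d => σ (i + 1)‖ ≤
      σ (k + 1) := by
  rw [one_sub_castLEIncl_mul_conjTranspose, diagonal_mul_diagonal]
  simpa only [ite_mul, zero_mul, one_mul] using l2_opNorm_diagonal_tail_le hk hσ hσd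

end Eigenvalues

end Matrix

open Matrix in
theorem stmt13_general (d k : ℕ) (hkd : k < d)
    (A W : Matrix (Fin d) (Fin d) ℝ) (σ : ℕ → ℝ)
    (hW : W.transpose * W = 1)
    (hA : A = W * Matrix.diagonal (fun i : Fin d => σ ((i : ℕ) + 1)) * W.transpose)
    (hσmono : ∀ i j : ℕ, 1 ≤ i → i ≤ j → j ≤ d → σ j ≤ σ i)
    (hσ0 : ∀ i : ℕ, 1 ≤ i → i ≤ d → 0 ≤ σ i)
    (U : Matrix (Fin d) (Fin k) ℝ)
    (hU : ∀ (i : Fin d) (j : Fin k), U i j = W i (Fin.castLE hkd.le j))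
    (X : Matrix (Fin d) (Fin k) ℝ) (hX : X.transpose * X = 1)
    (α : ℝ) (hα : specNorm ((1 - X * X.transpose) * U) ≤ α) :
    specNorm ((1 - X * X.transpose) * A) ≤ σ (k + 1) + α * σ 1 := by
  simp only [← conjTranspose_eq_transpose_of_trivial] at hW hA hX hα ⊢
  rw [specNorm_eq_l2_opNorm] at hα ⊢
  set J := castLEIncl ℝ hkd.le
  set D := diagonal fun i : Fin d => σ ((i : ℕ) + 1)
  have hσ : AntitoneOn σ (Set.Icc 1 d) := fun i hi j hj hij => hσmono i j hi.1 hij hj.2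
  have hσd : 0 ≤ σ d := hσ0 d (by omega) le_rfl
  have hWD : W * D = U * (Jᴴ * D) + W * ((1 - J * Jᴴ) * D) := by
    have hUJ : U = W * J := by
      rw [mul_castLEIncl]
      exact Matrix.ext hU
    rw [hUJ, sub_mul, one_mul, mul_sub]
    simp only [Matrix.mul_assoc]
    abel
  calc ‖(1 - X * Xᴴ) * A‖ ≤ ‖(1 - X * Xᴴ) * U‖ * ‖Jᴴ * D‖ + ‖(1 - J * Jᴴ) * D‖ := by
        rw [hA, hWD]
        exact l2_opNorm_mul_add_mul_mul_conjTranspose_le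
          (l2_opNorm_one_sub_mul_conjTranspose_le_one hX)
          (l2_opNorm_le_one_of_conjTranspose_mul_self_eq_one hW)
    _ ≤ α * σ 1 + σ (k + 1) := by
        gcongr
        · exact (norm_nonneg _).trans hα
        · exact l2_opNorm_castLEIncl_conjTranspose_mul_diagonal_le hkd hσ hσd
        · exact l2_opNorm_one_sub_castLEIncl_mul_diagonal_le hkd hσ hσd
    _ = σ (k + 1) + α * σ 1 := add_comm _ _

/-- if `X` nearly captures the top-k invariant subspace `U` of `A`,
then `X` gives a good spectral low-rank approximation of `A`.
Eigenvalues are 1-indexed: `σ j` for `1 ≤ j ≤ d`. -/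
theorem stmt13 (d k : ℕ) (hk : 0 < k) (hkd : k < d)
    (A W : Matrix (Fin d) (Fin d) ℝ) (σ : ℕ → ℝ)
    (hW : W.transpose * W = 1)
    (hA : A = W * Matrix.diagonal (fun i : Fin d => σ ((i : ℕ) + 1)) * W.transpose)
    (hσmono : ∀ i j : ℕ, 1 ≤ i → i ≤ j → j ≤ d → σ j ≤ σ i)
    (hσ0 : ∀ i : ℕ, 1 ≤ i → i ≤ d → 0 ≤ σ i)
    (U : Matrix (Fin d) (Fin k) ℝ)
    (hU : ∀ (i : Fin d) (j : Fin k), U i j = W i (Fin.castLE hkd.le j))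
    (X : Matrix (Fin d) (Fin k) ℝ) (hX : X.transpose * X = 1)
    (α : ℝ) (hα : specNorm ((1 - X * X.transpose) * U) ≤ α) :
    specNorm ((1 - X * X.transpose) * A) ≤ σ (k + 1) + α * σ 1 :=
  stmt13_general d k hkd A W σ hW hA hσmono hσ0 U hU X hX α hα
end
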